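/- For every integer n ≥ 1 the polynomial A₂(x,n) has degree 2(n−1) with leading coefficient 2^{2n}/((n−1)!)², it is even, i.e. A₂(x,n) = A₂(−x,n) as polynomials, its constant term is A₂(0,n) = (1+(−1)^{n−1})², and its value at x = 1 is A₂(1,n) = 4n². -/

import Mathlib

/-- The polynomial `[x choose k] = x(x−1)⋯(x−k+1)/k!`. -/
noncomputable def binomPoly (k : ℕ) : Polynomial ℚ :=
  Polynomial.C ((k.factorial : ℚ))⁻¹ *
    ∏ i ∈ Finset.range k, (Polynomial.X - Polynomial.C (i : ℚ))

/-- `a₂(x,n) = ∑_{ν=0}^n C(n,ν)·[x−ν+n−1 choose n−1]`. -/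
noncomputable def a2Poly (n : ℕ) : Polynomial ℚ :=
  ∑ ν ∈ Finset.range (n + 1),
    Polynomial.C ((n.choose ν : ℚ)) *
      (binomPoly (n - 1)).comp (Polynomial.X + Polynomial.C ((n : ℚ) - 1 - (ν : ℚ)))

/-- `A₂(x,n) = a₂(x,n)²`. -/
noncomputable def A2Poly (n : ℕ) : Polynomial ℚ := (a2Poly n) ^ 2

/-!
Since `A₂ = a₂²` with `a₂(x,n) = ∑ C(n,ν) [x+n−1−ν choose n−1]`, everything is a statement
about `a₂`. Each summand is a translate of `[x choose k] = descPochhammer k / k!` (`k = n−1`),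
so the coefficient of `x^k` in `a₂` is `∑ C(n,ν) / k! = 2ⁿ / k!`. The reflection
`[−y choose k] = (−1)^k [y+k−1 choose k]`, followed by `ν ↦ n−ν`, gives
`a₂(−x) = (−1)^k a₂(x)`. At `x = 0` and `x = 1` the arguments are integers, where
`[· choose k]` is an ordinary binomial coefficient: only the terms `ν = 0, n` resp. `ν = 0, 1`
survive, the term `ν = n` at `x = 0` being `[−1 choose k] = (−1)^k`.
-/

open Polynomial Finset

theorem binomPoly_eq_C_mul_descPochhammer (k : ℕ) :
    binomPoly k = C ((k.factorial : ℚ))⁻¹ * descPochhammer ℚ k :=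
  Polynomial.funext fun t ↦ by
    simp [binomPoly, eval_prod, descPochhammer_eval_eq_prod_range]

theorem binomPoly_natDegree (k : ℕ) : (binomPoly k).natDegree = k := by
  rw [binomPoly_eq_C_mul_descPochhammer, natDegree_C_mul (by positivity), descPochhammer_natDegree]

theorem binomPoly_leadingCoeff (k : ℕ) :
    (binomPoly k).leadingCoeff = ((k.factorial : ℚ))⁻¹ := by
  rw [binomPoly_eq_C_mul_descPochhammer, leadingCoeff_mul, leadingCoeff_C,
    (monic_descPochhammer ℚ k).leadingCoeff, mul_one]

theorem binomPoly_eval_natCast (k m : ℕ) : (binomPoly k).eval (m : ℚ) = m.choose k := by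
  rw [binomPoly_eq_C_mul_descPochhammer, eval_C_mul, descPochhammer_eval_eq_descFactorial,
    Nat.descFactorial_eq_factorial_mul_choose]
  push_cast
  field_simp

theorem binomPoly_eval_neg (k : ℕ) (y : ℚ) :
    (binomPoly k).eval (-y) = (-1) ^ k * (binomPoly k).eval (y + k - 1) := by
  rw [binomPoly_eq_C_mul_descPochhammer, eval_C_mul, eval_C_mul,
    descPochhammer_eval_eq_ascPochhammer ℚ (-y),
    show -y - k + 1 = -(y + k - 1) by ring, ascPochhammer_eval_neg_eq_descPochhammer]
  ring

theorem binomPoly_eval_neg_one (k : ℕ) : (binomPoly k).eval (-1) = (-1) ^ k := by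
  rw [binomPoly_eval_neg, add_sub_cancel_left, binomPoly_eval_natCast, Nat.choose_self,
    Nat.cast_one, mul_one]

theorem a2Poly_eq_sum_taylor (n : ℕ) :
    a2Poly n = ∑ ν ∈ range (n + 1),
      C ((n.choose ν : ℚ)) * taylor ((n : ℚ) - 1 - ν) (binomPoly (n - 1)) := by
  simp only [a2Poly, taylor_apply]

theorem a2Poly_eval (n : ℕ) (t : ℚ) :
    (a2Poly n).eval t =
      ∑ ν ∈ range (n + 1), (n.choose ν : ℚ) * (binomPoly (n - 1)).eval (t + n - 1 - ν) := by
  simp only [a2Poly_eq_sum_taylor, eval_finsetSum, eval_C_mul, taylor_eval, add_sub_assoc]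

theorem a2Poly_natDegree_le (n : ℕ) : (a2Poly n).natDegree ≤ n - 1 := by
  rw [a2Poly_eq_sum_taylor]
  refine natDegree_sum_le_of_forall_le _ _ fun ν _ ↦ ?_
  exact (natDegree_C_mul_le _ _).trans (by rw [natDegree_taylor, binomPoly_natDegree])

theorem a2Poly_coeff_pred (n : ℕ) :
    (a2Poly n).coeff (n - 1) = 2 ^ n / ((n - 1).factorial : ℚ) := by
  have hcoeff (c : ℚ) :
      (taylor c (binomPoly (n - 1))).coeff (n - 1) = ((n - 1).factorial : ℚ)⁻¹ := by
    have := coeff_taylor_natDegree (r := c) (f := binomPoly (n - 1))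
    rwa [binomPoly_natDegree, binomPoly_leadingCoeff] at this
  simp only [a2Poly_eq_sum_taylor, finsetSum_coeff, coeff_C_mul, hcoeff, ← sum_mul]
  rw [← Nat.cast_sum, Nat.sum_range_choose, div_eq_mul_inv, Nat.cast_pow, Nat.cast_two]

theorem a2Poly_natDegree (n : ℕ) : (a2Poly n).natDegree = n - 1 :=
  (a2Poly_natDegree_le n).antisymm <| le_natDegree_of_ne_zero <| by
    rw [a2Poly_coeff_pred]; positivity

theorem a2Poly_leadingCoeff (n : ℕ) :
    (a2Poly n).leadingCoeff = 2 ^ n / ((n - 1).factorial : ℚ) := by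
  rw [leadingCoeff, a2Poly_natDegree, a2Poly_coeff_pred]

theorem a2Poly_succ_eval_neg (k : ℕ) (t : ℚ) :
    (a2Poly (k + 1)).eval (-t) = (-1) ^ k * (a2Poly (k + 1)).eval t := by
  rw [a2Poly_eval, a2Poly_eval, mul_sum, ← sum_range_reflect]
  refine sum_congr rfl fun ν hν ↦ ?_
  have hν : ν ≤ k + 1 := Nat.lt_succ_iff.mp (mem_range.mp hν)
  rw [Nat.add_sub_cancel, Nat.add_sub_cancel, Nat.choose_symm hν, Nat.cast_sub hν,
    show -t + ((k + 1 : ℕ) : ℚ) - 1 - (((k + 1 : ℕ) : ℚ) - ν) = -(t + 1 - ν) by ring,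
    binomPoly_eval_neg,
    show t + 1 - ν + k - 1 = t + ((k + 1 : ℕ) : ℚ) - 1 - ν by push_cast; ring]
  ring

theorem a2Poly_succ_eval_zero (k : ℕ) : (a2Poly (k + 1)).eval 0 = 1 + (-1) ^ k := by
  have hterm : ∀ ν ∈ range (k + 1), ((k + 1).choose ν : ℚ) *
      (binomPoly k).eval (0 + ((k + 1 : ℕ) : ℚ) - 1 - ν) =
        ((k + 1).choose ν * (k - ν).choose k : ℕ) := by
    intro ν hν
    rw [show (0 : ℚ) + ((k + 1 : ℕ) : ℚ) - 1 - ν = ((k - ν : ℕ) : ℚ) by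
      rw [Nat.cast_sub (Nat.lt_succ_iff.mp (mem_range.mp hν))]; push_cast; ring,
      binomPoly_eval_natCast, Nat.cast_mul]
  rw [a2Poly_eval, Nat.add_sub_cancel, sum_range_succ, sum_congr rfl hterm, ← Nat.cast_sum,
    sum_range_succ', sum_eq_zero fun i hi ↦
      mul_eq_zero_of_right _ (Nat.choose_eq_zero_of_lt (by have := mem_range.mp hi; omega))]
  push_cast
  rw [show (0 : ℚ) + (k + 1) - 1 - (k + 1) = -1 by ring, binomPoly_eval_neg_one]
  simp

theorem a2Poly_succ_eval_one (k : ℕ) : (a2Poly (k + 1)).eval 1 = 2 * (k + 1) := by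
  have hterm : ∀ ν ∈ range (k + 2), ((k + 1).choose ν : ℚ) *
      (binomPoly k).eval (1 + ((k + 1 : ℕ) : ℚ) - 1 - ν) =
        ((k + 1).choose ν * (k + 1 - ν).choose k : ℕ) := by
    intro ν hν
    rw [show (1 : ℚ) + ((k + 1 : ℕ) : ℚ) - 1 - ν = ((k + 1 - ν : ℕ) : ℚ) by
      rw [Nat.cast_sub (Nat.lt_succ_iff.mp (mem_range.mp hν))]; ring,
      binomPoly_eval_natCast, Nat.cast_mul]
  rw [a2Poly_eval, Nat.add_sub_cancel, sum_congr rfl hterm, ← Nat.cast_sum, sum_range_succ',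
    sum_range_succ', sum_eq_zero fun i hi ↦
      mul_eq_zero_of_right _ (Nat.choose_eq_zero_of_lt (by have := mem_range.mp hi; omega))]
  simp only [zero_add, Nat.choose_one_right, add_tsub_cancel_right, Nat.choose_self, mul_one,
    Nat.choose_zero_right, tsub_zero, Nat.choose_succ_self_right, one_mul, Nat.cast_add,
    Nat.cast_one]
  ring

/-- For `n ≥ 1`, `A₂(x,n)` has degree `2(n−1)` with leading coefficient `2^{2n}/((n−1)!)²`,
is even, has constant term `(1+(−1)^{n−1})²`, and value `4n²` at `x = 1`. -/
theorem stmt10 : ∀ n : ℕ, 1 ≤ n →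
    (A2Poly n).natDegree = 2 * (n - 1) ∧
    (A2Poly n).leadingCoeff = 2 ^ (2 * n) / ((n - 1).factorial : ℚ) ^ 2 ∧
    (A2Poly n).comp (-Polynomial.X) = A2Poly n ∧
    (A2Poly n).coeff 0 = (1 + (-1 : ℚ) ^ (n - 1)) ^ 2 ∧
    (A2Poly n).eval (1 : ℚ) = 4 * (n : ℚ) ^ 2 := by
  intro n hn
  obtain ⟨k, rfl⟩ := Nat.exists_eq_add_of_le' hn
  refine ⟨?_, ?_, ?_, ?_, ?_⟩
  · rw [A2Poly, natDegree_pow, a2Poly_natDegree, mul_comm]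
  · rw [A2Poly, leadingCoeff_pow, a2Poly_leadingCoeff, div_pow, ← pow_mul, mul_comm 2]
  · refine Polynomial.funext fun t ↦ ?_
    rw [A2Poly, eval_comp, eval_pow, eval_pow, eval_neg, eval_X, a2Poly_succ_eval_neg, mul_pow,
      ← pow_mul, pow_mul', neg_one_sq, one_pow, one_mul]
  · rw [A2Poly, coeff_zero_eq_eval_zero, eval_pow, a2Poly_succ_eval_zero, Nat.add_sub_cancel]
  · rw [A2Poly, eval_pow, a2Poly_succ_eval_one]
    push_cast
    ring
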